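/- arXiv:1803.07178 — 6 statements merged into one kernel-verified Lean document; each statement's English description precedes it below -/
import Mathlib

section
/- Let Q, A, c, b, l define the QP min (1/2)xᵀQx + cᵀx s.t. Ax = b, x ≥ l. Fix x* ∈ ℚⁿ, y* ∈ ℚᵐ, and scaling factors Δ_P, Δ_D > 0. Define ĉ = Qx* + c − Aᵀy*, b̂ = b − Ax*, l̂ = l − x*, and the refined QP with objective (1/2)xᵀ(Δ_D/Δ_P)Qx + (Δ_D ĉ)ᵀx, constraints Ax = Δ_P b̂, x ≥ Δ_P l̂. Then for any x̂ ∈ ℝⁿ and ε_P ≥ 0: x̂ satisfies ‖Ax̂ − Δ_P b̂‖_∞ ≤ ε_P and x̂ ≥ Δ_P l̂ − ε_P·𝟙 if and only if x* + x̂/Δ_P satisfies ‖A(x* + x̂/Δ_P) − b‖_∞ ≤ ε_P/Δ_P and x* + x̂/Δ_P ≥ l − (ε_P/Δ_P)·𝟙. -/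
open Matrix

/-- QP refinement, primal feasibility part: xh is primal feasible for the refined QP within
    tolerance ε_P iff x* + xh/Δ_P is primal feasible for the original QP within ε_P/Δ_P.
    The norm on `Fin m → ℝ` is the maximum norm. -/
theorem refined_primal_feasibility {n m : ℕ}
    (Q : Matrix (Fin n) (Fin n) ℝ) (A : Matrix (Fin m) (Fin n) ℝ)
    (c l : Fin n → ℝ) (b : Fin m → ℝ)
    (xs : Fin n → ℝ) (ys : Fin m → ℝ)
    (ΔP ΔD : ℝ) (hΔP : 0 < ΔP) (hΔD : 0 < ΔD)
    (xh : Fin n → ℝ) (εP : ℝ) (hεP : 0 ≤ εP) :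
    (‖A.mulVec xh - ΔP • (b - A.mulVec xs)‖ ≤ εP ∧
      ∀ i, ΔP * (l - xs) i - εP ≤ xh i)
    ↔
    (‖A.mulVec (xs + ΔP⁻¹ • xh) - b‖ ≤ εP / ΔP ∧
      ∀ i, l i - εP / ΔP ≤ (xs + ΔP⁻¹ • xh) i) := by
  have hne : ΔP ≠ 0 := ne_of_gt hΔP
  have hkey : A.mulVec (xs + ΔP⁻¹ • xh) - b
      = ΔP⁻¹ • (A.mulVec xh - ΔP • (b - A.mulVec xs)) := by
    funext i
    simp [Matrix.mulVec_add, Matrix.mulVec_smul, Pi.sub_apply, Pi.add_apply,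
      Pi.smul_apply, smul_eq_mul]
    field_simp
    ring
  constructor
  · rintro ⟨h1, h2⟩
    constructor
    · rw [hkey, norm_smul, norm_inv, Real.norm_of_nonneg hΔP.le, div_eq_inv_mul]
      exact mul_le_mul_of_nonneg_left h1 (inv_nonneg.2 hΔP.le)
    · intro i
      have := h2 i
      simp only [Pi.add_apply, Pi.smul_apply, Pi.sub_apply, smul_eq_mul] at *
      rw [div_eq_inv_mul, ← sub_nonneg]
      have : 0 ≤ ΔP⁻¹ * (xh i - (ΔP * (l i - xs i) - εP)) :=
        mul_nonneg (inv_nonneg.2 hΔP.le) (by linarith)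
      calc 0 ≤ ΔP⁻¹ * (xh i - (ΔP * (l i - xs i) - εP)) := this
        _ = xs i + ΔP⁻¹ * xh i - (l i - ΔP⁻¹ * εP) := by field_simp; ring
  · rintro ⟨h1, h2⟩
    constructor
    · rw [hkey, norm_smul, norm_inv, Real.norm_of_nonneg hΔP.le, div_eq_inv_mul] at h1
      have := mul_le_mul_of_nonneg_left h1 hΔP.le
      rwa [← mul_assoc, ← mul_assoc, mul_inv_cancel₀ hne, one_mul, one_mul] at this
    · intro i
      have := h2 i
      simp only [Pi.add_apply, Pi.smul_apply, Pi.sub_apply, smul_eq_mul] at *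
      have h3 := mul_le_mul_of_nonneg_left this hΔP.le
      rw [← sub_nonneg]
      calc 0 ≤ ΔP * (xs i + ΔP⁻¹ * xh i) - ΔP * (l i - εP / ΔP) := by linarith
        _ = xh i - (ΔP * (l i - xs i) - εP) := by field_simp; ring
end

section
/- With the same setup as the refined QP (ĉ = Qx* + c − Aᵀy*, b̂ = b − Ax*, l̂ = l − x*, refined objective (1/2)xᵀ(Δ_D/Δ_P)Qx + (Δ_D ĉ)ᵀx, constraints Ax = Δ_P b̂, x ≥ Δ_P l̂): for any x̂ ∈ ℝⁿ, ŷ ∈ ℝᵐ and ε_D ≥ 0, the pair (x̂, ŷ) is dual feasible for the refined QP within absolute tolerance ε_D, i.e. (Δ_D/Δ_P)Qx̂ + Δ_D ĉ − Aᵀŷ ≥ −ε_D·𝟙, if and only if the reduced cost of (x* + x̂/Δ_P, y* + ŷ/Δ_D) in the original QP satisfies Q(x* + x̂/Δ_P) + c − Aᵀ(y* + ŷ/Δ_D) ≥ −(ε_D/Δ_D)·𝟙. -/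
open Matrix

/-- QP refinement, dual feasibility part: (x̂, ŷ) is dual feasible for the refined QP within
    tolerance ε_D iff (x* + x̂/Δ_P, y* + ŷ/Δ_D) is dual feasible for the original QP
    within ε_D/Δ_D, where ĉ = Qx* + c − Aᵀy*. -/
theorem refined_dual_feasibility {n m : ℕ}
    (Q : Matrix (Fin n) (Fin n) ℝ) (A : Matrix (Fin m) (Fin n) ℝ)
    (c l : Fin n → ℝ) (b : Fin m → ℝ)
    (xs : Fin n → ℝ) (ys : Fin m → ℝ)
    (ΔP ΔD : ℝ) (hΔP : 0 < ΔP) (hΔD : 0 < ΔD)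
    (xh : Fin n → ℝ) (yh : Fin m → ℝ) (εD : ℝ) (hεD : 0 ≤ εD) :
    (∀ i, -εD ≤ ((ΔD / ΔP) • Q.mulVec xh
        + ΔD • (Q.mulVec xs + c - Aᵀ.mulVec ys) - Aᵀ.mulVec yh) i)
    ↔
    (∀ i, -(εD / ΔD) ≤
        (Q.mulVec (xs + ΔP⁻¹ • xh) + c - Aᵀ.mulVec (ys + ΔD⁻¹ • yh)) i) := by
  have key : ∀ i, ((ΔD / ΔP) • Q.mulVec xh
      + ΔD • (Q.mulVec xs + c - Aᵀ.mulVec ys) - Aᵀ.mulVec yh) i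
      = ΔD * (Q.mulVec (xs + ΔP⁻¹ • xh) + c - Aᵀ.mulVec (ys + ΔD⁻¹ • yh)) i := by
    intro i
    simp only [mulVec_add, mulVec_smul, Pi.add_apply, Pi.sub_apply, Pi.smul_apply,
      smul_eq_mul]
    field_simp
    ring
  apply forall_congr'
  intro i
  rw [key, ← neg_div, div_le_iff₀ hΔD, mul_comm]
end

section
/- With the same refined QP setup (ĉ = Qx* + c − Aᵀy*, b̂ = b − Ax*, l̂ = l − x*), for any x̂ ∈ ℝⁿ, ŷ ∈ ℝᵐ and ε_S ≥ 0: |((Δ_D/Δ_P)Qx̂ + Δ_D ĉ − Aᵀŷ)ᵀ(x̂ − Δ_P l̂)| ≤ ε_S if and only if |(Q(x* + x̂/Δ_P) + c − Aᵀ(y* + ŷ/Δ_D))ᵀ((x* + x̂/Δ_P) − l)| ≤ ε_S/(Δ_P Δ_D). -/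
open Matrix

/-- QP refinement, complementary slackness part: (x̂, ŷ) satisfies complementary slackness
    for the refined QP within tolerance ε_S iff (x* + x̂/Δ_P, y* + ŷ/Δ_D) satisfies it for
    the original QP within ε_S/(Δ_P Δ_D). -/
theorem refined_complementary_slackness {n m : ℕ}
    (Q : Matrix (Fin n) (Fin n) ℝ) (A : Matrix (Fin m) (Fin n) ℝ)
    (c l : Fin n → ℝ) (b : Fin m → ℝ)
    (xs : Fin n → ℝ) (ys : Fin m → ℝ)
    (ΔP ΔD : ℝ) (hΔP : 0 < ΔP) (hΔD : 0 < ΔD)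
    (xh : Fin n → ℝ) (yh : Fin m → ℝ) (εS : ℝ) (hεS : 0 ≤ εS) :
    (|((ΔD / ΔP) • Q.mulVec xh + ΔD • (Q.mulVec xs + c - Aᵀ.mulVec ys)
        - Aᵀ.mulVec yh) ⬝ᵥ (xh - ΔP • (l - xs))| ≤ εS)
    ↔
    (|(Q.mulVec (xs + ΔP⁻¹ • xh) + c - Aᵀ.mulVec (ys + ΔD⁻¹ • yh)) ⬝ᵥ
        ((xs + ΔP⁻¹ • xh) - l)| ≤ εS / (ΔP * ΔD)) := by
  have hP := hΔP.ne'
  have hD := hΔD.ne'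
  have h1 : ((ΔD / ΔP) • Q.mulVec xh + ΔD • (Q.mulVec xs + c - Aᵀ.mulVec ys)
        - Aᵀ.mulVec yh)
      = ΔD • (Q.mulVec (xs + ΔP⁻¹ • xh) + c - Aᵀ.mulVec (ys + ΔD⁻¹ • yh)) := by
    funext i
    simp [Matrix.mulVec_add, Matrix.mulVec_smul, smul_smul, mul_inv_cancel₀ hD,
      div_eq_mul_inv]
    field_simp
    ring
  have h2 : (xh - ΔP • (l - xs)) = ΔP • ((xs + ΔP⁻¹ • xh) - l) := by
    funext i
    simp [smul_smul, mul_inv_cancel₀ hP]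
    field_simp
    ring
  rw [h1, h2, smul_dotProduct, dotProduct_smul, smul_eq_mul, smul_eq_mul, ← mul_assoc,
    abs_mul, abs_of_pos (by positivity : (0:ℝ) < ΔD * ΔP)]
  rw [le_div_iff₀ (by positivity : (0:ℝ) < ΔP * ΔD)]
  constructor <;> intro h <;> nlinarith [abs_nonneg ((Q.mulVec (xs + ΔP⁻¹ • xh) + c - Aᵀ.mulVec (ys + ΔD⁻¹ • yh)) ⬝ᵥ ((xs + ΔP⁻¹ • xh) - l))]
end

section
/- Suppose at each iteration k ≥ 1 of iterative QP refinement: the residuals satisfy δ_{P,k} ≤ ε̃^k and δ_{D,k} ≤ ε̃^k where ε̃ = max{1/α, ε} ∈ (0,1), and the scaling factor is updated as Δ_k = min{δ_{P,k}⁻¹, δ_{D,k}⁻¹, αΔ_{k−1}} with Δ_0 = 1 and α > 1. Then Δ_k ≥ 1/ε̃^k for all k ≥ 1. -/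
open scoped ENNReal

/-- Scaling factor growth in iterative refinement.  Residuals and scaling factors live in
    `ℝ≥0∞`, where `0⁻¹ = ∞` implements the convention that a zero residual drops out of the
    minimum.  If `δ_{P,k}, δ_{D,k} ≤ εt^k` and `Δ_k = min{δ_{P,k}⁻¹, δ_{D,k}⁻¹, α·Δ_{k−1}}`
    with `Δ_0 = 1`, `α > 1`, `εt = max{1/α, ε} ∈ (0,1)`, then `Δ_k ≥ 1/εt^k` for all `k ≥ 1`. -/
theorem scaling_factor_growth
    (δP δD Δ : ℕ → ℝ≥0∞) (εt α : ℝ≥0∞)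
    (hε0 : 0 < εt) (hε1 : εt < 1) (hα : 1 < α) (hαε : 1 / α ≤ εt)
    (hΔ0 : Δ 0 = 1)
    (hres : ∀ k, 1 ≤ k → δP k ≤ εt ^ k ∧ δD k ≤ εt ^ k)
    (hupd : ∀ k, 1 ≤ k → Δ k = min ((δP k)⁻¹) (min ((δD k)⁻¹) (α * Δ (k - 1)))) :
    ∀ k, 1 ≤ k → (εt ^ k)⁻¹ ≤ Δ k := by
  have hεα : εt⁻¹ ≤ α := by
    have := ENNReal.inv_le_inv.mpr hαε
    simpa [one_div] using this
  intro k hk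
  induction k with
  | zero => omega
  | succ n ih =>
    have hstep : (εt ^ (n + 1))⁻¹ ≤ α * Δ n := by
      have hprev : (εt ^ n)⁻¹ ≤ Δ n := by
        rcases Nat.eq_zero_or_pos n with h0 | hpos
        · subst h0; simp [hΔ0]
        · exact ih hpos
      calc (εt ^ (n + 1))⁻¹ = εt⁻¹ * (εt ^ n)⁻¹ := by
            rw [pow_succ, ENNReal.mul_inv (Or.inl (pow_ne_zero n hε0.ne'))
              (Or.inr hε0.ne'), mul_comm]
      _ ≤ α * Δ n := mul_le_mul' hεα hprev
    rw [hupd (n + 1) (by omega)]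
    obtain ⟨hP, hD⟩ := hres (n + 1) (by omega)
    refine le_min (ENNReal.inv_le_inv.mpr hP) (le_min (ENNReal.inv_le_inv.mpr hD) ?_)
    simpa using hstep
end

section
/- Under the QP solver accuracy assumption with tolerance ε ∈ [0,1) and complementarity bound σ ≥ 0, and with ε̃ = max{1/α, ε} for scaling limit α > 1, the iterates (x_k, y_k) of the iterative QP refinement algorithm applied to a primal and dual feasible QP satisfy for all k ≥ 1: ‖Ax_k − b‖_∞ ≤ ε̃^k, x_k − l ≥ −ε̃^k·𝟙, Qx_k + c − Aᵀy_k ≥ −ε̃^k·𝟙, and |(Qx_k + c − Aᵀy_k)ᵀ(x_k − l)| ≤ σ·ε̃^{2(k−1)}. -/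
open Matrix

/-- Maximal primal violation `δ_P = max{0, ‖Ax − b‖_∞, max{l − x}}`. -/
noncomputable def deltaP {n m : ℕ} (A : Matrix (Fin m) (Fin n) ℝ)
    (b : Fin m → ℝ) (l : Fin n → ℝ) (xv : Fin n → ℝ) : ℝ :=
  max 0 (max ‖A.mulVec xv - b‖ (⨆ i, (l i - xv i)))

/-- Maximal dual violation `δ_D = max{0, max{−(Qx + c − Aᵀy)}}`. -/
noncomputable def deltaD {n m : ℕ} (Q : Matrix (Fin n) (Fin n) ℝ)
    (A : Matrix (Fin m) (Fin n) ℝ) (c : Fin n → ℝ)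
    (xv : Fin n → ℝ) (yv : Fin m → ℝ) : ℝ :=
  max 0 (⨆ i, (Aᵀ.mulVec yv - Q.mulVec xv - c) i)

/-- Residual convergence of iterative QP refinement (Lemma on termination and residual
    convergence, bounds (7a)–(7e)).  The solver oracle satisfies the accuracy assumption
    with tolerance ε ∈ [0,1) and complementarity bound σ ≥ 0; the scaling factor is updated
    by `Δ_k = min{δ_P⁻¹, δ_D⁻¹, α·Δ_{k−1}}` (a zero residual dropping out of the minimum);
    iterates are refined by `(x_{k+1}, y_{k+1}) = (x_k, y_k) + (x̄, ȳ)/Δ_k`.  With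
    `ε̃ = max{1/α, ε}`, after every iteration `k ≥ 1` the primal, dual, and complementarity
    residuals are bounded by `ε̃^k`, `ε̃^k`, and `σ·ε̃^{2(k−1)}` respectively. -/
theorem iterative_refinement_residual_convergence {n m : ℕ}
    (Q : Matrix (Fin n) (Fin n) ℝ) (A : Matrix (Fin m) (Fin n) ℝ)
    (c l : Fin n → ℝ) (b : Fin m → ℝ)
    (ε σ α : ℝ) (hε0 : 0 ≤ ε) (hε1 : ε < 1) (hσ : 0 ≤ σ) (hα : 1 < α)
    (x : ℕ → Fin n → ℝ) (y : ℕ → Fin m → ℝ) (Δ : ℕ → ℝ)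
    (hx0 : x 0 = 0) (hy0 : y 0 = 0) (hΔ0 : Δ 0 = 1)
    (hprimal_feas : ∃ xf : Fin n → ℝ, A.mulVec xf = b ∧ ∀ i, l i ≤ xf i)
    (hdual_feas : ∃ (xf : Fin n → ℝ) (yf : Fin m → ℝ),
      ∀ i, Aᵀ.mulVec yf i ≤ (Q.mulVec xf + c) i)
    (hΔupd : ∀ k, 1 ≤ k → Δ k =
      min (min
        (if deltaP A b l (x k) = 0 then α * Δ (k - 1) else (deltaP A b l (x k))⁻¹)
        (if deltaD Q A c (x k) (y k) = 0 then α * Δ (k - 1)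
          else (deltaD Q A c (x k) (y k))⁻¹))
        (α * Δ (k - 1)))
    (hsolve : ∀ k : ℕ, ∃ (xb : Fin n → ℝ) (yb : Fin m → ℝ),
      ‖A.mulVec xb - Δ k • (b - A.mulVec (x k))‖ ≤ ε ∧
      (∀ i, Δ k * (l - x k) i - ε ≤ xb i) ∧
      (∀ i, Aᵀ.mulVec yb i - ε ≤
        (Q.mulVec xb + Δ k • (Q.mulVec (x k) + c - Aᵀ.mulVec (y k))) i) ∧
      |(Q.mulVec xb + Δ k • (Q.mulVec (x k) + c - Aᵀ.mulVec (y k)) - Aᵀ.mulVec yb) ⬝ᵥ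
        (xb - Δ k • (l - x k))| ≤ σ ∧
      x (k + 1) = x k + (Δ k)⁻¹ • xb ∧
      y (k + 1) = y k + (Δ k)⁻¹ • yb) :
    ∀ k, 1 ≤ k →
      ‖A.mulVec (x k) - b‖ ≤ (max α⁻¹ ε) ^ k ∧
      (∀ i, -((max α⁻¹ ε) ^ k) ≤ (x k - l) i) ∧
      (∀ i, -((max α⁻¹ ε) ^ k) ≤ (Q.mulVec (x k) + c - Aᵀ.mulVec (y k)) i) ∧
      |(Q.mulVec (x k) + c - Aᵀ.mulVec (y k)) ⬝ᵥ (x k - l)| ≤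
        σ * (max α⁻¹ ε) ^ (2 * (k - 1)) := by

  have hαpos : 0 < α := lt_trans one_pos hα
  set et := max α⁻¹ ε with het
  have hetpos : 0 < et := lt_of_lt_of_le (inv_pos.mpr hαpos) (le_max_left _ _)
  have hεet : ε ≤ et := le_max_right _ _
  have hetα : et⁻¹ ≤ α := by
    rw [← inv_inv α]
    exact inv_anti₀ (inv_pos.mpr hαpos) (le_max_left _ _)
  -- step lemma: residual bounds at k+1 from Δ-bound at k
  have step : ∀ k, 0 < Δ k → (Δ k)⁻¹ ≤ et ^ k →
      ‖A.mulVec (x (k+1)) - b‖ ≤ et ^ (k+1) ∧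
      (∀ i, -(et ^ (k+1)) ≤ (x (k+1) - l) i) ∧
      (∀ i, -(et ^ (k+1)) ≤ (Q.mulVec (x (k+1)) + c - Aᵀ.mulVec (y (k+1))) i) ∧
      |(Q.mulVec (x (k+1)) + c - Aᵀ.mulVec (y (k+1))) ⬝ᵥ (x (k+1) - l)| ≤
        σ * et ^ (2 * k) := by
    intro k hd hdi
    obtain ⟨xb, yb, h1, h2, h3, h4, hxe, hye⟩ := hsolve k
    have hdne : Δ k ≠ 0 := ne_of_gt hd
    have hdin : 0 ≤ (Δ k)⁻¹ := inv_nonneg.mpr hd.le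
    have hpk : (0:ℝ) ≤ et ^ k := (pow_pos hetpos k).le
    have hpow : (Δ k)⁻¹ * ε ≤ et ^ (k+1) := by
      calc (Δ k)⁻¹ * ε ≤ et ^ k * et := mul_le_mul hdi hεet hε0 hpk
        _ = et ^ (k+1) := (pow_succ et k).symm
    have eq1 : A.mulVec (x (k+1)) - b
        = (Δ k)⁻¹ • (A.mulVec xb - Δ k • (b - A.mulVec (x k))) := by
      rw [hxe]; funext i
      simp only [Matrix.mulVec_add, Matrix.mulVec_smul, Pi.add_apply, Pi.sub_apply,
        Pi.smul_apply, smul_eq_mul]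
      field_simp
      ring
    have eq2 : x (k+1) - l = (Δ k)⁻¹ • (xb - Δ k • (l - x k)) := by
      rw [hxe]; funext i
      simp only [Pi.add_apply, Pi.sub_apply, Pi.smul_apply, smul_eq_mul]
      field_simp
      ring
    have eq3 : Q.mulVec (x (k+1)) + c - Aᵀ.mulVec (y (k+1))
        = (Δ k)⁻¹ • (Q.mulVec xb + Δ k • (Q.mulVec (x k) + c - Aᵀ.mulVec (y k))
            - Aᵀ.mulVec yb) := by
      rw [hxe, hye]; funext i
      simp only [Matrix.mulVec_add, Matrix.mulVec_smul, Pi.add_apply, Pi.sub_apply,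
        Pi.smul_apply, smul_eq_mul]
      field_simp
      ring
    refine ⟨?_, ?_, ?_, ?_⟩
    · rw [eq1, norm_smul, Real.norm_eq_abs, abs_of_nonneg hdin]
      calc (Δ k)⁻¹ * ‖A.mulVec xb - Δ k • (b - A.mulVec (x k))‖
          ≤ (Δ k)⁻¹ * ε := by
            exact mul_le_mul_of_nonneg_left h1 hdin
        _ ≤ et ^ (k+1) := hpow
    · intro i
      have h2i := h2 i
      simp only [Pi.sub_apply] at h2i
      have hb : -ε ≤ (xb - Δ k • (l - x k)) i := by
        simp only [Pi.sub_apply, Pi.smul_apply, smul_eq_mul]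
        linarith
      have := mul_le_mul_of_nonneg_left hb hdin
      rw [eq2]
      simp only [Pi.smul_apply, smul_eq_mul]
      nlinarith
    · intro i
      have h3i := h3 i
      have hb : -ε ≤ (Q.mulVec xb + Δ k • (Q.mulVec (x k) + c - Aᵀ.mulVec (y k))
          - Aᵀ.mulVec yb) i := by
        simp only [Pi.sub_apply, Pi.add_apply, Pi.smul_apply, smul_eq_mul] at h3i ⊢
        linarith
      have := mul_le_mul_of_nonneg_left hb hdin
      rw [eq3]
      simp only [Pi.smul_apply, smul_eq_mul]
      nlinarith
    · rw [eq3, eq2, smul_dotProduct, dotProduct_smul, smul_eq_mul,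
        smul_eq_mul, ← mul_assoc, abs_mul, abs_mul, abs_of_nonneg hdin]
      have h5 : (Δ k)⁻¹ * (Δ k)⁻¹ ≤ et ^ k * et ^ k :=
        mul_le_mul hdi hdi hdin hpk
      have h6 : et ^ k * et ^ k = et ^ (2 * k) := by
        rw [two_mul, pow_add]
      calc (Δ k)⁻¹ * (Δ k)⁻¹ *
            |(Q.mulVec xb + Δ k • (Q.mulVec (x k) + c - Aᵀ.mulVec (y k))
              - Aᵀ.mulVec yb) ⬝ᵥ (xb - Δ k • (l - x k))|
          ≤ et ^ k * et ^ k * σ :=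
            mul_le_mul h5 h4 (abs_nonneg _) (by positivity)
        _ = σ * et ^ (2 * k) := by rw [h6]; ring
  -- main invariant by induction
  have key : ∀ k, 0 < Δ k ∧ (Δ k)⁻¹ ≤ et ^ k ∧
      (1 ≤ k →
        ‖A.mulVec (x k) - b‖ ≤ et ^ k ∧
        (∀ i, -(et ^ k) ≤ (x k - l) i) ∧
        (∀ i, -(et ^ k) ≤ (Q.mulVec (x k) + c - Aᵀ.mulVec (y k)) i) ∧
        |(Q.mulVec (x k) + c - Aᵀ.mulVec (y k)) ⬝ᵥ (x k - l)| ≤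
          σ * et ^ (2 * (k - 1))) := by
    intro k
    induction k with
    | zero =>
      refine ⟨by rw [hΔ0]; exact one_pos, by rw [hΔ0]; simp, by omega⟩
    | succ k ih =>
      obtain ⟨hd, hdi, _⟩ := ih
      obtain ⟨r1, r2, r3, r4⟩ := step k hd hdi
      have hR : 1 ≤ k + 1 →
          ‖A.mulVec (x (k+1)) - b‖ ≤ et ^ (k+1) ∧
          (∀ i, -(et ^ (k+1)) ≤ (x (k+1) - l) i) ∧
          (∀ i, -(et ^ (k+1)) ≤ (Q.mulVec (x (k+1)) + c - Aᵀ.mulVec (y (k+1))) i) ∧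
          |(Q.mulVec (x (k+1)) + c - Aᵀ.mulVec (y (k+1))) ⬝ᵥ (x (k+1) - l)| ≤
            σ * et ^ (2 * ((k+1) - 1)) := by
        intro _
        exact ⟨r1, r2, r3, by simpa using r4⟩
      have hetk : (0:ℝ) < et ^ (k+1) := pow_pos hetpos _
      have hαΔ : (et ^ (k+1))⁻¹ ≤ α * Δ k := by
        have h1 : (et ^ k)⁻¹ ≤ Δ k := by
          rw [← inv_inv (Δ k)]
          exact inv_anti₀ (inv_pos.mpr hd) hdi
        calc (et ^ (k+1))⁻¹ = et⁻¹ * (et ^ k)⁻¹ := by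
              rw [pow_succ, mul_inv]; ring
          _ ≤ α * Δ k := mul_le_mul hetα h1 (inv_nonneg.mpr (pow_pos hetpos k).le) hαpos.le
      have hδP : deltaP A b l (x (k+1)) ≤ et ^ (k+1) := by
        unfold deltaP
        refine max_le hetk.le (max_le r1 (Real.iSup_le (fun i => ?_) hetk.le))
        have := r2 i
        simp only [Pi.sub_apply] at this
        linarith
      have hδD : deltaD Q A c (x (k+1)) (y (k+1)) ≤ et ^ (k+1) := by
        unfold deltaD
        refine max_le hetk.le (Real.iSup_le (fun i => ?_) hetk.le)
        have := r3 i
        simp only [Pi.sub_apply, Pi.add_apply] at this ⊢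
        linarith
      have hges : (et ^ (k+1))⁻¹ ≤ Δ (k+1) := by
        rw [hΔupd (k+1) (by omega)]
        simp only [Nat.add_sub_cancel]
        refine le_min (le_min ?_ ?_) hαΔ
        · split_ifs with h
          · exact hαΔ
          · have hpos : 0 < deltaP A b l (x (k+1)) :=
              lt_of_le_of_ne (le_max_left 0 _) (Ne.symm h)
            exact inv_anti₀ hpos hδP
        · split_ifs with h
          · exact hαΔ
          · have hpos : 0 < deltaD Q A c (x (k+1)) (y (k+1)) :=
              lt_of_le_of_ne (le_max_left 0 _) (Ne.symm h)
            exact inv_anti₀ hpos hδD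
      have hdpos : 0 < Δ (k+1) := lt_of_lt_of_le (inv_pos.mpr hetk) hges
      refine ⟨hdpos, ?_, hR⟩
      have := inv_anti₀ (inv_pos.mpr hetk) hges
      rwa [inv_inv] at this
  intro k hk
  exact (key k).2.2 hk
end

section
/- Let x̂ be optimal for the refined QP min (1/2)xᵀ(Δ_D/Δ_P)Qx + (Δ_D ĉ)ᵀx s.t. Ax = Δ_P b̂, x ≥ Δ_P l̂ with multiplier ŷ (satisfying its KKT conditions exactly), where ĉ = Qx* + c − Aᵀy*, b̂ = b − Ax*, l̂ = l − x*, Δ_P, Δ_D > 0. Then x* + x̂/Δ_P together with multiplier y* + ŷ/Δ_D satisfies the KKT conditions of the original QP min (1/2)xᵀQx + cᵀx s.t. Ax = b, x ≥ l exactly, and hence (if Q is positive semidefinite) x* + x̂/Δ_P is a global optimum of the original QP. -/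
/-!
Translating the variables by `(x*, y*)` turns the KKT system of the original QP into the one with
data `(Q, ĉ, b̂, l̂)`, and scaling the primal variable by `Δ_P` and the multiplier by `Δ_D`
multiplies every KKT condition by a positive factor, which yields the system with data
`((Δ_D/Δ_P) Q, Δ_D ĉ, Δ_P b̂, Δ_P l̂)`; both changes of variables are bijections on KKT points.
For positive semidefinite `Q` the KKT conditions are sufficient for global optimality: the gradient
`Qx + c` differs from the nonnegative reduced gradient by `Aᵀy`, which vanishes on feasible
directions, and complementary slackness makes the reduced gradient pair nonnegatively with them.
-/

open Matrix

section QuadraticProgram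

variable {ι κ : Type*} [Fintype ι] [Fintype κ]

/-- KKT conditions of `min ½ xᵀQx + cᵀx` subject to `Ax = b`, `x ≥ l`, with multiplier `y`. -/
def IsKKTPoint (Q : Matrix ι ι ℝ) (c : ι → ℝ) (A : Matrix κ ι ℝ) (b : κ → ℝ) (l : ι → ℝ)
    (x : ι → ℝ) (y : κ → ℝ) : Prop :=
  A *ᵥ x = b ∧ (∀ i, l i ≤ x i) ∧ (∀ i, (Aᵀ *ᵥ y) i ≤ (Q *ᵥ x + c) i) ∧
    (Q *ᵥ x + c - Aᵀ *ᵥ y) ⬝ᵥ (x - l) = 0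

noncomputable def qpObjective (Q : Matrix ι ι ℝ) (c : ι → ℝ) (x : ι → ℝ) : ℝ :=
  (1 / 2) * (x ⬝ᵥ Q *ᵥ x) + c ⬝ᵥ x

variable {Q : Matrix ι ι ℝ} {c l : ι → ℝ} {A : Matrix κ ι ℝ} {b : κ → ℝ}

theorem isKKTPoint_shift_iff (xs d : ι → ℝ) (ys e : κ → ℝ) :
    IsKKTPoint Q (Q *ᵥ xs + c - Aᵀ *ᵥ ys) A (b - A *ᵥ xs) (l - xs) d e ↔
      IsKKTPoint Q c A b l (xs + d) (ys + e) := by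
  have hgrad : Q *ᵥ d + (Q *ᵥ xs + c - Aᵀ *ᵥ ys) = Q *ᵥ (xs + d) + c - Aᵀ *ᵥ ys := by
    rw [mulVec_add]; abel
  have hres : Q *ᵥ d + (Q *ᵥ xs + c - Aᵀ *ᵥ ys) - Aᵀ *ᵥ e =
      Q *ᵥ (xs + d) + c - Aᵀ *ᵥ (ys + e) := by
    rw [hgrad, mulVec_add (Aᵀ)]; abel
  have hgap : d - (l - xs) = xs + d - l := by abel
  unfold IsKKTPoint
  rw [hres, hgap, hgrad, mulVec_add A, eq_sub_iff_add_eq, add_comm (A *ᵥ d)]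
  refine and_congr Iff.rfl (and_congr (forall_congr' fun i => ?_) (and_congr
    (forall_congr' fun i => ?_) Iff.rfl))
  · simp only [Pi.sub_apply, Pi.add_apply, sub_le_iff_le_add']
  · simp only [mulVec_add, Pi.sub_apply, Pi.add_apply]
    constructor <;> intro h <;> linarith

theorem isKKTPoint_smul_iff {α β : ℝ} (hα : 0 < α) (hβ : 0 < β) (x : ι → ℝ) (y : κ → ℝ) :
    IsKKTPoint ((β / α) • Q) (β • c) A (α • b) (α • l) (α • x) (β • y) ↔
      IsKKTPoint Q c A b l x y := by
  have hgrad : ((β / α) • Q) *ᵥ (α • x) + β • c = β • (Q *ᵥ x + c) := by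
    rw [smul_mulVec, mulVec_smul, smul_smul, div_mul_cancel₀ β hα.ne', smul_add]
  unfold IsKKTPoint
  rw [hgrad, mulVec_smul, mulVec_smul, smul_right_inj hα.ne', ← smul_sub, ← smul_sub,
    smul_dotProduct, dotProduct_smul, smul_eq_mul, smul_eq_mul,
    mul_eq_zero_iff_left hβ.ne', mul_eq_zero_iff_left hα.ne']
  refine and_congr Iff.rfl (and_congr (forall_congr' fun i => ?_) (and_congr
    (forall_congr' fun i => ?_) Iff.rfl))
  · exact mul_le_mul_iff_of_pos_left hα
  · exact mul_le_mul_iff_of_pos_left hβ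

theorem qpObjective_add (hQ : Q.IsSymm) (x d : ι → ℝ) :
    qpObjective Q c (x + d) = qpObjective Q c x + (Q *ᵥ x + c) ⬝ᵥ d + (1 / 2) * (d ⬝ᵥ Q *ᵥ d) := by
  have hcross : d ⬝ᵥ Q *ᵥ x = x ⬝ᵥ Q *ᵥ d := by
    rw [dotProduct_mulVec, ← mulVec_transpose, hQ.eq, dotProduct_comm]
  unfold qpObjective
  simp only [mulVec_add, dotProduct_add, add_dotProduct, hcross, dotProduct_comm (Q *ᵥ x) d,
    dotProduct_comm c d]
  ring

theorem IsKKTPoint.gradient_dotProduct_nonneg {x z : ι → ℝ} {y : κ → ℝ}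
    (h : IsKKTPoint Q c A b l x y) (hAz : A *ᵥ z = b) (hlz : ∀ i, l i ≤ z i) :
    0 ≤ (Q *ᵥ x + c) ⬝ᵥ (z - x) := by
  obtain ⟨hAx, -, hdual, hcompl⟩ := h
  set w := Q *ᵥ x + c - Aᵀ *ᵥ y
  have hAy : (Aᵀ *ᵥ y) ⬝ᵥ (z - x) = 0 := by
    rw [mulVec_transpose, ← dotProduct_mulVec, mulVec_sub, hAz, hAx, sub_self, dotProduct_zero]
  have hw : 0 ≤ w ⬝ᵥ (z - l) :=
    Finset.sum_nonneg fun i _ =>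
      mul_nonneg (sub_nonneg.2 (hdual i)) (sub_nonneg.2 (hlz i))
  calc 0 ≤ w ⬝ᵥ (z - l) - w ⬝ᵥ (x - l) := by rw [hcompl, sub_zero]; exact hw
    _ = w ⬝ᵥ (z - x) := by rw [← dotProduct_sub, sub_sub_sub_cancel_right]
    _ = (Q *ᵥ x + c) ⬝ᵥ (z - x) := by rw [sub_dotProduct, hAy, sub_zero]

theorem IsKKTPoint.isMinOn {x : ι → ℝ} {y : κ → ℝ} (hQ : Q.PosSemidef)
    (h : IsKKTPoint Q c A b l x y) :
    IsMinOn (qpObjective Q c) {z | A *ᵥ z = b ∧ ∀ i, l i ≤ z i} x := by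
  rintro z ⟨hAz, hlz⟩
  have hcurv : 0 ≤ (z - x) ⬝ᵥ Q *ᵥ (z - x) := by
    simpa using hQ.dotProduct_mulVec_nonneg (z - x)
  have hexp := qpObjective_add (c := c) (isHermitian_iff_isSymm.1 hQ.isHermitian) x (z - x)
  rw [add_sub_cancel] at hexp
  show qpObjective Q c x ≤ qpObjective Q c z
  linarith [h.gradient_dotProduct_nonneg hAz hlz]

end QuadraticProgram

/-- Exact refinement corollary: if (x̂, ŷ) exactly satisfies the KKT conditions of the
    refined QP (data ((Δ_D/Δ_P)Q, Δ_D ĉ, Δ_P b̂, Δ_P l̂) with ĉ = Qx* + c − Aᵀy*,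
    b̂ = b − Ax*, l̂ = l − x*), then (x* + x̂/Δ_P, y* + ŷ/Δ_D) exactly satisfies the KKT
    conditions of the original QP, and if Q is positive semidefinite then x* + x̂/Δ_P is a
    global optimum of the original QP. -/
theorem exact_refinement_corollary {n m : ℕ}
    (Q : Matrix (Fin n) (Fin n) ℝ) (A : Matrix (Fin m) (Fin n) ℝ)
    (c l : Fin n → ℝ) (b : Fin m → ℝ)
    (xs : Fin n → ℝ) (ys : Fin m → ℝ)
    (ΔP ΔD : ℝ) (hΔP : 0 < ΔP) (hΔD : 0 < ΔD)
    (xh : Fin n → ℝ) (yh : Fin m → ℝ)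
    (hkkt1 : A.mulVec xh = ΔP • (b - A.mulVec xs))
    (hkkt2 : ∀ i, ΔP * (l - xs) i ≤ xh i)
    (hkkt3 : ∀ i, Aᵀ.mulVec yh i ≤
      ((ΔD / ΔP) • Q.mulVec xh + ΔD • (Q.mulVec xs + c - Aᵀ.mulVec ys)) i)
    (hkkt4 : ((ΔD / ΔP) • Q.mulVec xh + ΔD • (Q.mulVec xs + c - Aᵀ.mulVec ys)
      - Aᵀ.mulVec yh) ⬝ᵥ (xh - ΔP • (l - xs)) = 0) :
    (A.mulVec (xs + ΔP⁻¹ • xh) = b ∧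
     (∀ i, l i ≤ (xs + ΔP⁻¹ • xh) i) ∧
     (∀ i, Aᵀ.mulVec (ys + ΔD⁻¹ • yh) i ≤
        (Q.mulVec (xs + ΔP⁻¹ • xh) + c) i) ∧
     (Q.mulVec (xs + ΔP⁻¹ • xh) + c - Aᵀ.mulVec (ys + ΔD⁻¹ • yh)) ⬝ᵥ
        ((xs + ΔP⁻¹ • xh) - l) = 0) ∧
    (Q.PosSemidef →
      ∀ x : Fin n → ℝ, A.mulVec x = b → (∀ i, l i ≤ x i) →
        (1/2) * ((xs + ΔP⁻¹ • xh) ⬝ᵥ Q.mulVec (xs + ΔP⁻¹ • xh)) + c ⬝ᵥ (xs + ΔP⁻¹ • xh) ≤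
          (1/2) * (x ⬝ᵥ Q.mulVec x) + c ⬝ᵥ x) := by
  have hrefined : IsKKTPoint ((ΔD / ΔP) • Q) (ΔD • (Q *ᵥ xs + c - Aᵀ *ᵥ ys)) A
      (ΔP • (b - A *ᵥ xs)) (ΔP • (l - xs)) (ΔP • ΔP⁻¹ • xh) (ΔD • ΔD⁻¹ • yh) := by
    rw [smul_inv_smul₀ hΔP.ne', smul_inv_smul₀ hΔD.ne', IsKKTPoint, smul_mulVec]
    exact ⟨hkkt1, hkkt2, hkkt3, hkkt4⟩
  have hkkt : IsKKTPoint Q c A b l (xs + ΔP⁻¹ • xh) (ys + ΔD⁻¹ • yh) :=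
    (isKKTPoint_shift_iff _ _ _ _).1 ((isKKTPoint_smul_iff hΔP hΔD _ _).1 hrefined)
  exact ⟨hkkt, fun hQ x hAx hlx => hkkt.isMinOn hQ ⟨hAx, hlx⟩⟩
end
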